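/- arXiv:2101.09966 — 5 statements merged into one kernel-verified Lean document; each statement's English description precedes it below -/
import Mathlib

section
/- Let R be a commutative ring and, for each maximal ideal m of R, let X(m) be a Thomason subset of Spec(R_m). Put X = ⋃_{m maximal} X(m)*. Then the following are equivalent: (i) the family {X(m) : m a maximal ideal of R} satisfies condition (†) and X is a Thomason subset of Spec(R); (ii) X = ⋃_{I ∈ 𝓘} V(I), where 𝓘 is the set of all finitely generated ideals I of R such that V(I R_m) ⊆ X(m) for every maximal ideal m of R. -/
open PrimeSpectrum
universe u

/-- A subset of `Spec A` is Thomason if it is a union of the zero loci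
of a set of finitely generated ideals. -/
def IsThomason {A : Type*} [CommRing A] (X : Set (PrimeSpectrum A)) : Prop :=
  ∃ 𝓘 : Set (Ideal A), (∀ I ∈ 𝓘, I.FG) ∧
    X = ⋃ I ∈ 𝓘, PrimeSpectrum.zeroLocus (I : Set A)

variable {R : Type u} [CommRing R]

/-- The map `Spec (R_m) → Spec R` induced by the localization map. -/
def locMap (m : MaximalSpectrum R) :
    PrimeSpectrum (Localization.AtPrime m.asIdeal) → PrimeSpectrum R :=
  PrimeSpectrum.comap (algebraMap R (Localization.AtPrime m.asIdeal))

/-- `Y*`: the image of a subset of `Spec (R_m)` in `Spec R`. -/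
def star (m : MaximalSpectrum R)
    (Y : Set (PrimeSpectrum (Localization.AtPrime m.asIdeal))) : Set (PrimeSpectrum R) :=
  locMap m '' Y

/-- Condition (†). -/
def Dagger (Xf : ∀ m : MaximalSpectrum R, Set (PrimeSpectrum (Localization.AtPrime m.asIdeal))) :
    Prop :=
  ∀ m m' : MaximalSpectrum R,
    {p ∈ star m (Xf m) | p.asIdeal ≤ m'.asIdeal} =
      {p ∈ star m' (Xf m') | p.asIdeal ≤ m.asIdeal}


lemma locMap_asIdeal (m : MaximalSpectrum R)
    (q : PrimeSpectrum (Localization.AtPrime m.asIdeal)) :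
    (locMap m q).asIdeal = q.asIdeal.comap (algebraMap R (Localization.AtPrime m.asIdeal)) :=
  rfl

lemma locMap_le (m : MaximalSpectrum R)
    (q : PrimeSpectrum (Localization.AtPrime m.asIdeal)) :
    (locMap m q).asIdeal ≤ m.asIdeal := by
  intro x hx
  by_contra hxm
  exact q.isPrime.ne_top (Ideal.eq_top_of_isUnit_mem _ hx
    (IsLocalization.map_units (M := m.asIdeal.primeCompl) (Localization.AtPrime m.asIdeal) ⟨x, hxm⟩))

lemma exists_locMap (m : MaximalSpectrum R) (p : PrimeSpectrum R)
    (h : p.asIdeal ≤ m.asIdeal) : ∃ q, locMap m q = p := by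
  have hr := PrimeSpectrum.localization_comap_range (Localization.AtPrime m.asIdeal)
    m.asIdeal.primeCompl
  have : p ∈ Set.range (comap (algebraMap R (Localization.AtPrime m.asIdeal))) := by
    rw [hr]
    exact Set.disjoint_left.mpr fun a ha hap => ha (h hap)
  exact this

lemma locMap_injective (m : MaximalSpectrum R) : Function.Injective (locMap m) :=
  PrimeSpectrum.localization_comap_injective (Localization.AtPrime m.asIdeal) m.asIdeal.primeCompl

/-- Lemma 4.9: the family `{X(m)}` satisfies (†) and `X = ⋃ X(m)*` is Thomason
iff `X` is the union of `V(I)` where `I` ranges over the finitely generated ideals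
of `R` with `V(I_m) ⊆ X(m)` for all maximal ideals `m`. -/
theorem stmt0
    (Xf : ∀ m : MaximalSpectrum R, Set (PrimeSpectrum (Localization.AtPrime m.asIdeal)))
    (hXf : ∀ m, IsThomason (Xf m)) :
    (Dagger Xf ∧ IsThomason (⋃ m, star m (Xf m))) ↔
      (⋃ m, star m (Xf m)) =
        ⋃ I ∈ {I : Ideal R | I.FG ∧ ∀ m : MaximalSpectrum R,
            PrimeSpectrum.zeroLocus
              ((I.map (algebraMap R (Localization.AtPrime m.asIdeal))) : Set _) ⊆ Xf m},
          PrimeSpectrum.zeroLocus (I : Set R) := by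
  constructor
  · rintro ⟨hD, 𝓙, h𝓙fg, hX⟩
    ext p
    simp only [Set.mem_iUnion, Set.mem_setOf_eq]
    constructor
    · rintro ⟨m, hp⟩
      have hpX : p ∈ ⋃ J ∈ 𝓙, PrimeSpectrum.zeroLocus (J : Set R) := by
        rw [← hX]; exact Set.mem_iUnion.mpr ⟨m, hp⟩
      simp only [Set.mem_iUnion] at hpX
      obtain ⟨J, hJ, hpJ⟩ := hpX
      refine ⟨J, ⟨h𝓙fg J hJ, ?_⟩, hpJ⟩
      intro m' q' hq'
      rw [PrimeSpectrum.mem_zeroLocus, ← Ideal.span_le, Ideal.span_eq] at hq'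
      set p' := locMap m' q' with hp'def
      have hJp' : J ≤ p'.asIdeal := by
        rw [locMap_asIdeal]
        exact le_trans Ideal.le_comap_map (Ideal.comap_mono hq')
      have hp'X : p' ∈ ⋃ m, star m (Xf m) := by
        rw [hX]
        simp only [Set.mem_iUnion]
        exact ⟨J, hJ, by rwa [PrimeSpectrum.mem_zeroLocus, ← Ideal.span_le, Ideal.span_eq]⟩
      obtain ⟨m'', hm''⟩ := Set.mem_iUnion.mp hp'X
      have hle'' : p'.asIdeal ≤ m''.asIdeal := by
        obtain ⟨q'', hq'', heq⟩ := hm''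
        rw [← heq]
        exact locMap_le m'' q''
      have hle' : p'.asIdeal ≤ m'.asIdeal := locMap_le m' q'
      have := hD m'' m'
      have hp'mem : p' ∈ {r ∈ star m'' (Xf m'') | r.asIdeal ≤ m'.asIdeal} := ⟨hm'', hle'⟩
      rw [this] at hp'mem
      obtain ⟨⟨q'', hq''X, hq''eq⟩, -⟩ := hp'mem
      rwa [← locMap_injective m' hq''eq]
    · rintro ⟨I, ⟨hIfg, hI⟩, hpI⟩
      obtain ⟨M, hM, hpM⟩ := p.asIdeal.exists_le_maximal p.isPrime.ne_top
      set m : MaximalSpectrum R := ⟨M, hM⟩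
      obtain ⟨q, hq⟩ := exists_locMap m p hpM
      refine ⟨m, q, hI m ?_, hq⟩
      rw [PrimeSpectrum.mem_zeroLocus, ← Ideal.span_le, Ideal.span_eq,
        Ideal.map_le_iff_le_comap]
      rw [PrimeSpectrum.mem_zeroLocus] at hpI
      have : I ≤ p.asIdeal := hpI
      rw [← hq] at this
      exact this
  · intro hEq
    have key : ∀ m m' : MaximalSpectrum R,
        {r ∈ star m (Xf m) | r.asIdeal ≤ m'.asIdeal} ⊆
          {r ∈ star m' (Xf m') | r.asIdeal ≤ m.asIdeal} := by
      rintro m m' p ⟨hpm, hpm'⟩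
      have hlem : p.asIdeal ≤ m.asIdeal := by
        obtain ⟨q, hq, heq⟩ := hpm
        rw [← heq]
        exact locMap_le m q
      refine ⟨?_, hlem⟩
      have hpX : p ∈ ⋃ M ∈ {I : Ideal R | I.FG ∧ ∀ m : MaximalSpectrum R,
          PrimeSpectrum.zeroLocus
            ((I.map (algebraMap R (Localization.AtPrime m.asIdeal))) : Set _) ⊆ Xf m},
          PrimeSpectrum.zeroLocus (M : Set R) := by
        rw [← hEq]
        exact Set.mem_iUnion.mpr ⟨m, hpm⟩
      simp only [Set.mem_iUnion, Set.mem_setOf_eq] at hpX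
      obtain ⟨I, ⟨hIfg, hI⟩, hpI⟩ := hpX
      obtain ⟨q', hq'⟩ := exists_locMap m' p hpm'
      refine ⟨q', hI m' ?_, hq'⟩
      rw [PrimeSpectrum.mem_zeroLocus, ← Ideal.span_le, Ideal.span_eq,
        Ideal.map_le_iff_le_comap]
      rw [PrimeSpectrum.mem_zeroLocus] at hpI
      have : I ≤ p.asIdeal := hpI
      rw [← hq'] at this
      exact this
    refine ⟨fun m m' => Set.Subset.antisymm (key m m') (key m' m), ?_⟩
    exact ⟨_, fun I hI => hI.1, hEq⟩
end

section
/- Let R be a commutative noetherian ring and, for each maximal ideal m of R, let X(m) be a Thomason subset of Spec(R_m). If the family {X(m) : m a maximal ideal of R} satisfies condition (†), then the set X = ⋃_{m maximal} X(m)* is stable under specialization (if p ∈ X and p ⊆ q for primes p, q, then q ∈ X), and hence X is a Thomason subset of Spec(R); in particular the family is automatically compatible. -/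
open PrimeSpectrum
universe u

variable {R : Type u} [CommRing R]

/-- A compatible family of Thomason subsets: each `X(m)` is Thomason, the family
satisfies (†), and the union `⋃ X(m)*` is a Thomason subset of `Spec R`. -/
def CompatibleFamily
    (Xf : ∀ m : MaximalSpectrum R, Set (PrimeSpectrum (Localization.AtPrime m.asIdeal))) :
    Prop :=
  (∀ m, IsThomason (Xf m)) ∧ Dagger Xf ∧ IsThomason (⋃ m, star m (Xf m))

/-!
A Thomason set is a union of closed sets, hence stable under specialization; over a noetherian
ring conversely every specialization-closed set `X` is Thomason, being the union of the
`V(p)` with `p ∈ X`, all `p` finitely generated. So it suffices to show that `X = ⋃ X(m)*` is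
stable under specialization. If `p ∈ X(m)*` and `p ⊆ q ⊆ M` with `M` maximal, then (†) moves
`p` into `X(M)*`; as `Spec R_M → Spec R` is an embedding onto the primes inside `M`, the
specialization `p ⤳ q` lifts to `Spec R_M`, where `X(M)` is stable under specialization.
-/

open Topology

lemma IsThomason.stableUnderSpecialization {A : Type*} [CommRing A] {X : Set (PrimeSpectrum A)}
    (h : IsThomason X) : StableUnderSpecialization X := by
  obtain ⟨𝓘, -, rfl⟩ := h
  exact stableUnderSpecialization_iUnion _ fun _ ↦ stableUnderSpecialization_iUnion _ fun _ ↦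
    (isClosed_zeroLocus _).stableUnderSpecialization

lemma isThomason_of_stableUnderSpecialization {A : Type*} [CommRing A] [IsNoetherianRing A]
    {X : Set (PrimeSpectrum A)} (hX : StableUnderSpecialization X) : IsThomason X := by
  refine ⟨asIdeal '' X, fun _ ⟨p, _, hp⟩ ↦ hp ▸ IsNoetherian.noetherian p.asIdeal, ?_⟩
  ext q
  simp only [Set.biUnion_image, Set.mem_iUnion, mem_zeroLocus, SetLike.coe_subset_coe,
    asIdeal_le_asIdeal, exists_prop]
  exact ⟨fun hq ↦ ⟨q, hq, le_rfl⟩, fun ⟨p, hp, hpq⟩ ↦ hX ((le_iff_specializes p q).1 hpq) hp⟩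

lemma StableUnderSpecialization.mem_image_of_specializes {X Y : Type*} [TopologicalSpace X]
    [TopologicalSpace Y] {f : X → Y} (hf : IsInducing f) {s : Set X}
    (hs : StableUnderSpecialization s) {x y : X} (hx : x ∈ s) (hxy : f x ⤳ f y) :
    f y ∈ f '' s :=
  ⟨y, hs (hf.specializes_iff.1 hxy) hx, rfl⟩

lemma isInducing_locMap (m : MaximalSpectrum R) : IsInducing (locMap m) :=
  localization_comap_isInducing _ m.asIdeal.primeCompl

lemma mem_range_locMap {m : MaximalSpectrum R} {p : PrimeSpectrum R}
    (hp : p.asIdeal ≤ m.asIdeal) : p ∈ Set.range (locMap m) := by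
  rw [locMap, localization_comap_range _ m.asIdeal.primeCompl]
  exact Set.disjoint_left.2 fun _ hxm hxp ↦ hxm (hp hxp)

section Gluing

variable {Xf : ∀ m : MaximalSpectrum R, Set (PrimeSpectrum (Localization.AtPrime m.asIdeal))}

lemma Dagger.mem_star_of_le
    (hD : Dagger Xf) {m m' : MaximalSpectrum R} {p : PrimeSpectrum R} (hp : p ∈ star m (Xf m))
    (hpm' : p.asIdeal ≤ m'.asIdeal) : p ∈ star m' (Xf m') := by
  have hp' : p ∈ {p ∈ star m (Xf m) | p.asIdeal ≤ m'.asIdeal} := ⟨hp, hpm'⟩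
  rw [hD m m'] at hp'
  exact hp'.1

lemma Dagger.stableUnderSpecialization_iUnion_star
    (hD : Dagger Xf) (hXf : ∀ m, StableUnderSpecialization (Xf m)) :
    StableUnderSpecialization (⋃ m, star m (Xf m)) := by
  rintro p q hpq ⟨_, ⟨m, rfl⟩, hp⟩
  obtain ⟨M, hM, hqM⟩ := q.asIdeal.exists_le_maximal q.isPrime.ne_top
  have hpq' : p.asIdeal ≤ q.asIdeal := (le_iff_specializes p q).2 hpq
  have hpM : p ∈ star ⟨M, hM⟩ (Xf ⟨M, hM⟩) := hD.mem_star_of_le hp (hpq'.trans hqM)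
  obtain ⟨p', hp', rfl⟩ := hpM
  obtain ⟨q', rfl⟩ := mem_range_locMap (m := ⟨M, hM⟩) hqM
  exact Set.mem_iUnion.2 ⟨_, (hXf _).mem_image_of_specializes (isInducing_locMap _) hp' hpq⟩

end Gluing

/-- Over a commutative noetherian ring, a family of Thomason subsets satisfying (†)
glues to a specialization-closed, hence Thomason, subset; in particular the family
is automatically compatible. -/
theorem stmt4 [IsNoetherianRing R]
    (Xf : ∀ m : MaximalSpectrum R, Set (PrimeSpectrum (Localization.AtPrime m.asIdeal)))
    (hXf : ∀ m, IsThomason (Xf m)) (hDagger : Dagger Xf) :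
    (∀ p q : PrimeSpectrum R, p ∈ (⋃ m, star m (Xf m)) → p.asIdeal ≤ q.asIdeal →
      q ∈ ⋃ m, star m (Xf m)) ∧
    IsThomason (⋃ m, star m (Xf m)) ∧
    CompatibleFamily Xf := by
  have hspec := hDagger.stableUnderSpecialization_iUnion_star
    fun m ↦ (hXf m).stableUnderSpecialization
  have hthom := isThomason_of_stableUnderSpecialization hspec
  exact ⟨fun p q hp hpq ↦ hspec ((le_iff_specializes p q).1 hpq) hp, hthom, hXf, hDagger, hthom⟩
end

section
/- Let k be a field and R = ∏_{n∈ℕ} k the countably infinite product ring. For i ∈ ℕ let e_i ∈ R be the idempotent with i-th coordinate 1 and all other coordinates 0. If m is a maximal ideal of R such that e_i ∈ m for every i ∈ ℕ (i.e., m corresponds to a non-principal ultrafilter), then the singleton {m} is not a Thomason subset of Spec(R); equivalently, there is no finitely generated ideal I of R with V(I) = {m}. -/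
open PrimeSpectrum
universe u

lemma stmt5_key {k : Type u} [Field k] (m : Ideal (ℕ → k)) (hm : m.IsMaximal)
    (he : ∀ i : ℕ, Pi.single i (1 : k) ∈ m) :
    ¬ ∃ I : Ideal (ℕ → k), I.FG ∧
        PrimeSpectrum.zeroLocus (I : Set (ℕ → k)) = {⟨m, hm.isPrime⟩} := by
  classical
  rintro ⟨I, ⟨s, hs⟩, hV⟩
  by_cases hj : ∃ j : ℕ, ∀ f ∈ s, f j = 0
  · obtain ⟨j, hjs⟩ := hj
    set φ := Pi.evalRingHom (fun _ : ℕ => k) j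
    have hp : (RingHom.ker φ).IsPrime := RingHom.ker_isPrime φ
    have hmem : (⟨RingHom.ker φ, hp⟩ : PrimeSpectrum (ℕ → k)) ∈
        PrimeSpectrum.zeroLocus (I : Set (ℕ → k)) := by
      intro f hf
      have : I ≤ RingHom.ker φ := by
        rw [← hs, Ideal.span_le]
        intro g hg
        exact hjs g hg
      exact this hf
    rw [hV] at hmem
    have : RingHom.ker φ = m := congrArg PrimeSpectrum.asIdeal hmem
    have h1 : Pi.single j (1 : k) ∈ RingHom.ker φ := this ▸ he j
    simp [φ, RingHom.mem_ker] at h1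
  · push_neg at hj
    choose g hgs hgj using hj
    have h1 : (1 : ℕ → k) ∈ I := by
      have : (1 : ℕ → k) = ∑ f ∈ s, (fun j => if g j = f then (f j)⁻¹ else 0) * f := by
        funext j
        rw [Finset.sum_apply]
        simp only [Pi.mul_apply]
        have : ∀ f ∈ s, (if g j = f then (f j)⁻¹ else 0) * f j
            = if g j = f then (f j)⁻¹ * f j else 0 := by
          intro f _; split <;> simp
        rw [Finset.sum_congr rfl this, Finset.sum_ite_eq]
        simp [hgs j, inv_mul_cancel₀ (hgj j)]
      rw [this, ← hs]
      exact Ideal.sum_mem _ fun f hf =>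
        Ideal.mul_mem_left _ _ (Ideal.subset_span hf)
    have hIm : I ≤ m := by
      have : (⟨m, hm.isPrime⟩ : PrimeSpectrum (ℕ → k)) ∈
          PrimeSpectrum.zeroLocus (I : Set (ℕ → k)) := by rw [hV]; rfl
      exact this
    exact hm.ne_top (Ideal.eq_top_iff_one m |>.mpr (hIm h1))

/-- In `R = k^ω`, a maximal ideal containing all the idempotents `e_i = Pi.single i 1`
(i.e. corresponding to a non-principal ultrafilter) is not a Thomason subset of
`Spec R` as a singleton; equivalently, no finitely generated ideal `I` satisfies
`V(I) = {m}`. -/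
theorem stmt5 {k : Type u} [Field k] (m : Ideal (ℕ → k)) (hm : m.IsMaximal)
    (he : ∀ i : ℕ, Pi.single i (1 : k) ∈ m) :
    ¬ IsThomason ({⟨m, hm.isPrime⟩} : Set (PrimeSpectrum (ℕ → k))) ∧
    ¬ ∃ I : Ideal (ℕ → k), I.FG ∧
        PrimeSpectrum.zeroLocus (I : Set (ℕ → k)) = {⟨m, hm.isPrime⟩} := by
  have key := stmt5_key m hm he
  refine ⟨?_, key⟩
  rintro ⟨𝓘, hfg, hX⟩
  have hmem : (⟨m, hm.isPrime⟩ : PrimeSpectrum (ℕ → k)) ∈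
      ⋃ I ∈ 𝓘, PrimeSpectrum.zeroLocus (I : Set (ℕ → k)) := by
    rw [← hX]; rfl
  simp only [Set.mem_iUnion] at hmem
  obtain ⟨I, hI𝓘, hmI⟩ := hmem
  refine key ⟨I, hfg I hI𝓘, ?_⟩
  apply Set.eq_singleton_iff_unique_mem.mpr
  refine ⟨hmI, fun p hp => ?_⟩
  have : p ∈ ({⟨m, hm.isPrime⟩} : Set (PrimeSpectrum (ℕ → k))) := by
    rw [hX]
    exact Set.mem_iUnion₂.mpr ⟨I, hI𝓘, hp⟩
  exact this
end

section
/- Let R be a commutative ring. The assignments T ↦ X = ⋃{V(I) : I an ideal of R with R/I ∈ T} and X ↦ T = {M an R-module : Supp(M) ⊆ X} are mutually inverse bijections between hereditary torsion pairs of finite type (T,F) in Mod-R and Thomason subsets X of Spec(R). In particular, for every Thomason subset X the class {M : Supp(M) ⊆ X} is the torsion class of a hereditary torsion pair of finite type, and for every hereditary torsion pair of finite type (T,F) the set ⋃{V(I) : R/I ∈ T} is Thomason and T = {M : Supp(M) ⊆ ⋃{V(I) : R/I ∈ T}}. -/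
/-!
Two facts carry the argument. First, `Spec R` is compact in the constructible topology, where
`D(f)` and `V(I)` with `I` finitely generated are open; so `V(J) ⊆ ⋃ V(Iₖ)` with the `Iₖ` finitely
generated forces a product of finitely many `Iₖ`, repetitions allowed, into `J`. Second, if the
torsion-free class is closed under directed colimits, then `R ⧸ J ∈ T` already implies
`R ⧸ J₀ ∈ T` for a finitely generated `J₀ ≤ J`.

Modules supported in any `X` form a hereditary torsion class. When `X` is Thomason, an element
of a directed colimit supported in `X` is killed by a finitely generated `K` with `V(K) ⊆ X`,
hence already at a finite stage, which gives finite type. Conversely, the ideals `J` with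
`R ⧸ J ∈ T` are closed under products and enlargement, so by compactness `R ⧸ J ∈ T` as soon as
`V(J)` lies in `⋃ {V(I) : R ⧸ I ∈ T}`, and a module is in `T` exactly when all its cyclic
submodules `R ⧸ ann m` are.
-/

open CategoryTheory
universe u

variable {R : Type u} [CommRing R]

/-- A torsion pair `(T, F)` in `Mod-R`: `T` is exactly the class of modules with no
nonzero maps into members of `F`, and `F` is exactly the class of modules receiving
no nonzero maps from members of `T`. -/
structure IsTorsionPair (T F : Set (ModuleCat.{u} R)) : Prop where
  mem_torsion_iff : ∀ M : ModuleCat.{u} R, M ∈ T ↔ ∀ N ∈ F, ∀ f : M ⟶ N, f = 0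
  mem_torsionFree_iff : ∀ N : ModuleCat.{u} R, N ∈ F ↔ ∀ M ∈ T, ∀ f : M ⟶ N, f = 0

/-- A class of modules is hereditary (closed under submodules). -/
def HereditaryClass (T : Set (ModuleCat.{u} R)) : Prop :=
  ∀ M : ModuleCat.{u} R, M ∈ T → ∀ S : Submodule R M, ModuleCat.of R S ∈ T

/-- A class of modules is closed under direct limits (directed colimits). -/
def ClosedUnderDirectedColimits (F : Set (ModuleCat.{u} R)) : Prop :=
  ∀ (ι : Type u) [Preorder ι] [IsDirected ι (· ≤ ·)] [Nonempty ι]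
    (D : ι ⥤ ModuleCat.{u} R) (c : Limits.Cocone D), Limits.IsColimit c →
    (∀ i, D.obj i ∈ F) → c.pt ∈ F

/-- The class of modules supported on `X`. -/
def torsionOfSet (X : Set (PrimeSpectrum R)) : Set (ModuleCat.{u} R) :=
  {M | Module.support R M ⊆ X}

/-- The torsion-free class associated to a torsion class. -/
def freeOf (T : Set (ModuleCat.{u} R)) : Set (ModuleCat.{u} R) :=
  {N | ∀ M ∈ T, ∀ f : M ⟶ N, f = 0}

/-- The subset `⋃ {V(I) : R/I ∈ T}` of `Spec R` associated to a torsion class. -/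
def thomasonOf (T : Set (ModuleCat.{u} R)) : Set (PrimeSpectrum R) :=
  ⋃ I ∈ {I : Ideal R | ModuleCat.of R (R ⧸ I) ∈ T}, PrimeSpectrum.zeroLocus (I : Set R)

open Limits PrimeSpectrum Topology

lemma Ideal.torsionOf_le_torsionOf_apply {M N : Type*} [AddCommGroup M] [Module R M]
    [AddCommGroup N] [Module R N] (f : M →ₗ[R] N) (m : M) :
    Ideal.torsionOf R M m ≤ Ideal.torsionOf R N (f m) := fun a ha => by
  rw [Ideal.mem_torsionOf_iff] at ha ⊢
  rw [← map_smul, ha, map_zero]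

lemma Ideal.FG.multiset_prod {L : Multiset (Ideal R)} (hL : ∀ I ∈ L, I.FG) : L.prod.FG :=
  Multiset.prod_induction _ L (fun _ _ => Submodule.FG.mul) ⟨{1}, by simp [Ideal.one_eq_top]⟩ hL

lemma Module.support_quotient_ideal (I : Ideal R) :
    Module.support R (R ⧸ I) = zeroLocus (I : Set R) := by
  rw [Module.support_eq_zeroLocus, Ideal.annihilator_quotient]

lemma Module.support_span_singleton {M : Type*} [AddCommGroup M] [Module R M] (m : M) :
    Module.support R (R ∙ m) = zeroLocus (Ideal.torsionOf R M m : Set R) := by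
  rw [← (Ideal.quotTorsionOfEquivSpanSingleton R M m).support_eq, Module.support_quotient_ideal]

lemma PrimeSpectrum.exists_multiset_prod_le_radical_of_zeroLocus_subset {𝓘 : Set (Ideal R)}
    (hfg : ∀ I ∈ 𝓘, I.FG) {J : Ideal R}
    (hJ : zeroLocus (J : Set R) ⊆ ⋃ I ∈ 𝓘, zeroLocus (I : Set R)) :
    ∃ L : Multiset (Ideal R), (∀ I ∈ L, I ∈ 𝓘) ∧ L.prod ≤ J.radical := by
  let V : J ⊕ 𝓘 → Set (PrimeSpectrum R) :=
    Sum.elim (fun f => basicOpen f.1) (fun I => zeroLocus I.1)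
  have hV : ∀ i, IsOpen (WithTopology.ofTopology ⁻¹' V i :
      Set (WithConstructibleTopology (PrimeSpectrum R))) := by
    rintro (f | ⟨I, hI⟩)
    · exact (isCompact_basicOpen f.1).isOpen_constructibleTopology_of_isOpen isOpen_basicOpen
    · obtain ⟨hc, -⟩ := isCompact_isOpen_iff_ideal.2 ⟨I, hfg I hI, rfl⟩
      exact hc.isOpen_constructibleTopology_of_isClosed (isClosed_zeroLocus _)
  have hcover : Set.univ ⊆ ⋃ i, (WithTopology.ofTopology ⁻¹' V i :
      Set (WithConstructibleTopology (PrimeSpectrum R))) := by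
    rintro ⟨p⟩ -
    by_cases hp : p ∈ zeroLocus (J : Set R)
    · obtain ⟨I, hI, hpI⟩ := Set.mem_iUnion₂.1 (hJ hp)
      exact Set.mem_iUnion.2 ⟨.inr ⟨I, hI⟩, hpI⟩
    · obtain ⟨f, hfJ, hfp⟩ := Set.not_subset.1 hp
      exact Set.mem_iUnion.2 ⟨.inl ⟨f, hfJ⟩, hfp⟩
  obtain ⟨t, ht⟩ := isCompact_univ.elim_finite_subcover _ hV hcover
  refine ⟨(t.val.filterMap Sum.getRight?).map Subtype.val, ?_, ?_⟩
  · simp only [Multiset.mem_map, Multiset.mem_filterMap]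
    rintro _ ⟨I, -, rfl⟩
    exact I.2
  · rw [← zeroLocus_subset_zeroLocus_iff]
    intro p hp
    obtain ⟨i, hit, hpi⟩ := Set.mem_iUnion₂.1 (ht (Set.mem_univ (WithTopology.toTopology _ p)))
    rcases i with f | I
    · exact absurd (hp f.2) hpi
    · exact Ideal.multiset_prod_le_inf.trans ((Multiset.inf_le (Multiset.mem_map_of_mem
        Subtype.val ((Multiset.mem_filterMap Sum.getRight? _).2 ⟨Sum.inr I, hit, rfl⟩))).trans hpi)

lemma PrimeSpectrum.exists_multiset_prod_le_of_zeroLocus_subset {𝓘 : Set (Ideal R)}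
    (hfg : ∀ I ∈ 𝓘, I.FG) {J : Ideal R}
    (hJ : zeroLocus (J : Set R) ⊆ ⋃ I ∈ 𝓘, zeroLocus (I : Set R)) :
    ∃ L : Multiset (Ideal R), (∀ I ∈ L, I ∈ 𝓘) ∧ L.prod ≤ J := by
  obtain ⟨L, hL𝓘, hLJ⟩ := exists_multiset_prod_le_radical_of_zeroLocus_subset hfg hJ
  obtain ⟨n, hn⟩ := Ideal.exists_pow_le_of_le_radical_of_fg hLJ
    (Ideal.FG.multiset_prod fun I hI => hfg I (hL𝓘 I hI))
  exact ⟨n • L, fun I hI => hL𝓘 I (Multiset.mem_of_mem_nsmul hI), by rwa [Multiset.prod_nsmul]⟩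

lemma IsThomason.stableUnderSpecialization_s7 {X : Set (PrimeSpectrum R)} (hX : IsThomason X) :
    StableUnderSpecialization X := by
  obtain ⟨𝓘, -, rfl⟩ := hX
  intro p q hpq hp
  obtain ⟨I, hI, hpI⟩ := Set.mem_iUnion₂.1 hp
  exact Set.mem_iUnion₂.2 ⟨I, hI, fun x hx => (le_iff_specializes p q).2 hpq (hpI hx)⟩

lemma IsThomason.exists_fg_le_of_zeroLocus_subset {X : Set (PrimeSpectrum R)} (hX : IsThomason X)
    {J : Ideal R} (hJ : zeroLocus (J : Set R) ⊆ X) :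
    ∃ K ≤ J, K.FG ∧ zeroLocus (K : Set R) ⊆ X := by
  obtain ⟨𝓘, hfg, rfl⟩ := hX
  obtain ⟨L, hL𝓘, hLJ⟩ := exists_multiset_prod_le_of_zeroLocus_subset hfg hJ
  refine ⟨L.prod, hLJ, Ideal.FG.multiset_prod fun I hI => hfg I (hL𝓘 I hI), fun p hp => ?_⟩
  obtain ⟨I, hIL, hIp⟩ := (p.isPrime.multiset_prod_le).1 hp
  exact Set.mem_iUnion₂.2 ⟨I, hL𝓘 I hIL, hIp⟩

/-- Closure under quotients of direct sums and under extensions. -/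
structure IsTorsionClass (T : Set (ModuleCat.{u} R)) : Prop where
  mem_of_iSup_range_eq_top {M : ModuleCat.{u} R} {ι : Type u} {N : ι → ModuleCat.{u} R}
    (f : ∀ i, N i →ₗ[R] M) : (∀ i, N i ∈ T) → ⨆ i, LinearMap.range (f i) = ⊤ → M ∈ T
  mem_of_ker_mem_of_range_mem {M : ModuleCat.{u} R} {N : Type u} [AddCommGroup N] [Module R N]
    (f : M →ₗ[R] N) : ModuleCat.of R (LinearMap.ker f) ∈ T →
      ModuleCat.of R (LinearMap.range f) ∈ T → M ∈ T

def torsionSubmodule (T : Set (ModuleCat.{u} R)) (M : ModuleCat.{u} R) : Submodule R M :=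
  ⨆ K : {K : Submodule R M // ModuleCat.of R K ∈ T}, K.1

lemma le_torsionSubmodule {T : Set (ModuleCat.{u} R)} {M : ModuleCat.{u} R} {K : Submodule R M}
    (hK : ModuleCat.of R K ∈ T) : K ≤ torsionSubmodule T M :=
  le_iSup (fun K : {K : Submodule R M // ModuleCat.of R K ∈ T} => K.1) ⟨K, hK⟩

lemma mem_freeOf_of_injective {T : Set (ModuleCat.{u} R)} {N N' : ModuleCat.{u} R}
    (i : N →ₗ[R] N') (hi : Function.Injective i) (hN' : N' ∈ freeOf T) : N ∈ freeOf T := by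
  intro M hM g
  have h0 := congrArg ModuleCat.Hom.hom (hN' M hM (g ≫ ModuleCat.ofHom i))
  ext m
  exact hi (by simpa using LinearMap.congr_fun h0 m)

namespace IsTorsionClass

variable {T : Set (ModuleCat.{u} R)} (hT : IsTorsionClass T)
include hT

lemma mem_of_surjective {M N : ModuleCat.{u} R} (f : M →ₗ[R] N) (hf : Function.Surjective f)
    (hM : M ∈ T) : N ∈ T :=
  hT.mem_of_iSup_range_eq_top (ι := PUnit) (fun _ => f) (fun _ => hM)
    (by rw [iSup_const, LinearMap.range_eq_top.2 hf])

lemma mem_of_linearEquiv {M N : ModuleCat.{u} R} (e : M ≃ₗ[R] N) (hM : M ∈ T) : N ∈ T :=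
  hT.mem_of_surjective e.toLinearMap e.surjective hM

lemma map_mem {M N : ModuleCat.{u} R} {K : Submodule R M} (hK : ModuleCat.of R K ∈ T)
    (f : M →ₗ[R] N) : ModuleCat.of R (K.map f) ∈ T :=
  hT.mem_of_surjective (f.submoduleMap K) (f.submoduleMap_surjective K) hK

lemma torsionSubmodule_mem (M : ModuleCat.{u} R) :
    ModuleCat.of R (torsionSubmodule T M) ∈ T := by
  refine hT.mem_of_iSup_range_eq_top
    (fun K : {K : Submodule R M // ModuleCat.of R K ∈ T} =>
      Submodule.inclusion (le_torsionSubmodule K.2)) (fun K => K.2) ?_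
  apply Submodule.map_injective_of_injective (torsionSubmodule T M).injective_subtype
  simp only [Submodule.map_iSup, Submodule.range_inclusion, Submodule.map_comap_subtype,
    Submodule.map_subtype_top]
  exact iSup_congr fun K => inf_eq_right.2 (le_torsionSubmodule K.2)

lemma mem_of_torsionSubmodule_eq_top {M : ModuleCat.{u} R} (h : torsionSubmodule T M = ⊤) :
    M ∈ T :=
  hT.mem_of_surjective (torsionSubmodule T M).subtype
    (by rw [← LinearMap.range_eq_top, Submodule.range_subtype, h]) (hT.torsionSubmodule_mem M)

lemma map_torsionSubmodule_le {M N : ModuleCat.{u} R} (f : M →ₗ[R] N) :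
    (torsionSubmodule T M).map f ≤ torsionSubmodule T N :=
  le_torsionSubmodule (hT.map_mem (hT.torsionSubmodule_mem M) f)

lemma quotient_torsionSubmodule_mem_freeOf (M : ModuleCat.{u} R) :
    ModuleCat.of R (M ⧸ torsionSubmodule T M) ∈ freeOf T := by
  set t := torsionSubmodule T M
  intro N hN g
  set P := (LinearMap.range g.hom).comap t.mkQ
  have htP : t ≤ P := fun x hx => by
    simp [P, (Submodule.Quotient.mk_eq_zero t).2 hx]
  have hP : ModuleCat.of R P ∈ T := by
    refine hT.mem_of_ker_mem_of_range_mem (t.mkQ ∘ₗ P.subtype) ?_ ?_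
    · rw [LinearMap.ker_comp, Submodule.ker_mkQ]
      exact hT.mem_of_linearEquiv (Submodule.comapSubtypeEquivOfLe htP).symm
        (hT.torsionSubmodule_mem M)
    · rw [LinearMap.range_comp, Submodule.range_subtype,
        Submodule.map_comap_eq_of_surjective t.mkQ_surjective]
      exact hT.mem_of_surjective g.hom.rangeRestrict g.hom.surjective_rangeRestrict hN
  have hrange : LinearMap.range g.hom ≤ ⊥ := by
    rw [← Submodule.map_comap_eq_of_surjective t.mkQ_surjective (LinearMap.range g.hom),
      ← Submodule.mkQ_map_self t]
    exact Submodule.map_mono (le_torsionSubmodule hP)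
  ext x
  simpa using hrange ⟨x, rfl⟩

theorem isTorsionPair : IsTorsionPair T (freeOf T) where
  mem_torsion_iff M := by
    refine ⟨fun hM N hN f => hN M hM f, fun h => hT.mem_of_torsionSubmodule_eq_top ?_⟩
    have h0 := congrArg ModuleCat.Hom.hom
      (h _ (hT.quotient_torsionSubmodule_mem_freeOf M) (ModuleCat.ofHom (Submodule.mkQ _)))
    simpa using congrArg LinearMap.ker h0
  mem_torsionFree_iff _ := Iff.rfl

end IsTorsionClass

namespace IsTorsionPair

variable {T F : Set (ModuleCat.{u} R)} (htp : IsTorsionPair T F)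
include htp

lemma linearMap_eq_zero {M N : ModuleCat.{u} R} (hM : M ∈ T) (hN : N ∈ F) (f : M →ₗ[R] N) :
    f = 0 :=
  congrArg ModuleCat.Hom.hom ((htp.mem_torsion_iff M).1 hM N hN (ModuleCat.ofHom f))

lemma mem_torsion_of_forall {M : ModuleCat.{u} R} (h : ∀ N ∈ F, ∀ f : M →ₗ[R] N, f = 0) :
    M ∈ T :=
  (htp.mem_torsion_iff M).2 fun N hN f => ModuleCat.hom_ext (h N hN f.hom)

lemma torsionFree_eq : F = freeOf T :=
  Set.ext htp.mem_torsionFree_iff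

theorem isTorsionClass : IsTorsionClass T where
  mem_of_iSup_range_eq_top f hN hf := htp.mem_torsion_of_forall fun K hK g =>
    LinearMap.ker_eq_top.1 <| top_unique <| hf ▸ iSup_le fun i =>
      LinearMap.range_le_ker_iff.2 (htp.linearMap_eq_zero (hN i) hK _)
  mem_of_ker_mem_of_range_mem f hker hrange := htp.mem_torsion_of_forall fun K hK g => by
    have hle : LinearMap.ker f ≤ LinearMap.ker g := fun x hx =>
      LinearMap.congr_fun (htp.linearMap_eq_zero hker hK (g ∘ₗ (LinearMap.ker f).subtype)) ⟨x, hx⟩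
    have h0 := htp.linearMap_eq_zero hrange hK
      ((LinearMap.ker f).liftQ g hle ∘ₗ f.quotKerEquivRange.symm.toLinearMap)
    ext x
    simpa [LinearMap.quotKerEquivRange_symm_apply_image] using
      LinearMap.congr_fun h0 ⟨f x, LinearMap.mem_range_self f x⟩

end IsTorsionPair

theorem isTorsionClass_torsionOfSet (X : Set (PrimeSpectrum R)) :
    IsTorsionClass (torsionOfSet.{u} X) where
  mem_of_iSup_range_eq_top {M} _ N f hN hf p hp := by
    have hspan : Submodule.span R (⋃ i, (LinearMap.range (f i) : Set M)) = ⊤ := by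
      simpa [Submodule.span_iUnion] using hf
    obtain ⟨m, hm, hpm⟩ := (Module.mem_support_iff_of_span_eq_top hspan).1 hp
    obtain ⟨i, n, rfl⟩ := Set.mem_iUnion.1 hm
    refine hN i (Module.mem_support_iff_exists_annihilator.2 ⟨n, ?_⟩)
    rw [Ideal.annihilator_span_singleton_eq_torsionOf] at hpm ⊢
    exact (Ideal.torsionOf_le_torsionOf_apply (f i) n).trans hpm
  mem_of_ker_mem_of_range_mem f hker hrange := by
    change Module.support R _ ⊆ X
    rw [Module.support_of_exact (LinearMap.exact_iff.2 (by
      rw [LinearMap.ker_rangeRestrict, Submodule.range_subtype])) (Submodule.injective_subtype _)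
      f.surjective_rangeRestrict]
    exact Set.union_subset hker hrange

theorem hereditaryClass_torsionOfSet (X : Set (PrimeSpectrum R)) :
    HereditaryClass (torsionOfSet.{u} X) := fun _ hM S =>
  (Module.support_subset_of_injective S.subtype S.injective_subtype).trans hM

theorem thomasonOf_torsionOfSet {X : Set (PrimeSpectrum R)} (hX : StableUnderSpecialization X) :
    thomasonOf (torsionOfSet.{u} X) = X := by
  refine subset_antisymm (Set.iUnion₂_subset fun I hI => ?_) fun p hp => ?_
  · simpa [torsionOfSet, Module.support_quotient_ideal] using hI
  · refine Set.mem_iUnion₂.2 ⟨p.asIdeal, ?_, fun _ h => h⟩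
    change Module.support R _ ⊆ X
    rw [Module.support_quotient_ideal]
    exact fun q hq => hX ((le_iff_specializes p q).1 hq) hp

lemma mem_freeOf_torsionOfSet_iff {X : Set (PrimeSpectrum R)} {N : ModuleCat.{u} R} :
    N ∈ freeOf (torsionOfSet.{u} X) ↔
      ∀ n : N, zeroLocus (Ideal.torsionOf R N n : Set R) ⊆ X → n = 0 := by
  refine ⟨fun hN n hn => ?_, fun h M hM g => ?_⟩
  · have hT : ModuleCat.of R (R ∙ n) ∈ torsionOfSet.{u} X := by
      change Module.support R _ ⊆ X
      rwa [Module.support_span_singleton]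
    have h0 := congrArg ModuleCat.Hom.hom (hN _ hT (ModuleCat.ofHom (R ∙ n).subtype))
    simpa using LinearMap.congr_fun h0 ⟨n, Submodule.mem_span_singleton_self n⟩
  · ext m
    refine h _ ((zeroLocus_anti_mono (Ideal.torsionOf_le_torsionOf_apply g.hom m)).trans ?_)
    rw [← Module.support_span_singleton]
    exact (Module.support_subset_of_injective _ (Submodule.injective_subtype _)).trans hM

section DirectedColimit

variable {ι : Type u} [Preorder ι] [IsDirected ι (· ≤ ·)] [Nonempty ι]
  {D : ι ⥤ ModuleCat.{u} R} {c : Cocone D}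

lemma exists_map_eq_zero_of_isColimit (hc : IsColimit c) {i : ι} {y : D.obj i}
    (hy : c.ι.app i y = 0) : ∃ j, ∃ h : i ≤ j, D.map (homOfLE h) y = 0 := by
  rw [← map_zero (c.ι.app i).hom] at hy
  obtain ⟨j, f, g, hfg⟩ := Concrete.isColimit_exists_of_rep_eq D hc y 0 hy
  refine ⟨j, leOfHom f, ?_⟩
  rw [Subsingleton.elim (homOfLE (leOfHom f)) f]
  simpa [Subsingleton.elim g f] using hfg

lemma exists_le_torsionOf_map_of_isColimit (hc : IsColimit c) {i : ι} (y : D.obj i)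
    {K : Ideal R} (hK : K.FG) (hKy : K ≤ Ideal.torsionOf R c.pt (c.ι.app i y)) :
    ∃ j, ∃ h : i ≤ j, K ≤ Ideal.torsionOf R (D.obj j) (D.map (homOfLE h) y) := by
  classical
  obtain ⟨s, rfl⟩ := hK
  have hs : ∀ a : s, ∃ j, ∃ h : i ≤ j, D.map (homOfLE h) (a.1 • y) = 0 := fun a =>
    exists_map_eq_zero_of_isColimit hc (by
      rw [map_smul, ← Ideal.mem_torsionOf_iff]
      exact hKy (Submodule.subset_span a.2))
  choose j hij hj using hs
  obtain ⟨k, hk⟩ := Finset.exists_le (insert i (Finset.univ.image j))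
  have hik : i ≤ k := hk i (Finset.mem_insert_self _ _)
  refine ⟨k, hik, Ideal.span_le.2 fun a ha => ?_⟩
  have hjk : j ⟨a, ha⟩ ≤ k := hk _ (Finset.mem_insert_of_mem (by simp))
  have hcomp : homOfLE hik = homOfLE (hij ⟨a, ha⟩) ≫ homOfLE hjk := rfl
  rw [SetLike.mem_coe, Ideal.mem_torsionOf_iff, ← map_smul, hcomp, Functor.map_comp,
    ModuleCat.comp_apply, hj, map_zero]

end DirectedColimit

theorem IsThomason.closedUnderDirectedColimits_freeOf {X : Set (PrimeSpectrum R)}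
    (hX : IsThomason X) : ClosedUnderDirectedColimits (freeOf (torsionOfSet.{u} X)) := by
  intro ι _ _ _ D c hc hD
  refine mem_freeOf_torsionOfSet_iff.2 fun n hn => ?_
  obtain ⟨K, hKn, hKfg, hKX⟩ := hX.exists_fg_le_of_zeroLocus_subset hn
  obtain ⟨i, y, rfl⟩ := Concrete.isColimit_exists_rep D hc n
  obtain ⟨j, hij, hKy⟩ := exists_le_torsionOf_map_of_isColimit hc y hKfg hKn
  have hy : D.map (homOfLE hij) y = 0 :=
    mem_freeOf_torsionOfSet_iff.1 (hD j) _ ((zeroLocus_anti_mono hKy).trans hKX)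
  rw [← c.w (homOfLE hij), ModuleCat.comp_apply, hy, map_zero]

-- Reducible, so that `rw` sees the objects as the quotients `M ⧸ K i`.
abbrev quotientDiagram {ι : Type u} [Preorder ι] {M : Type u} [AddCommGroup M] [Module R M]
    (K : ι → Submodule R M) (hK : Monotone K) : ι ⥤ ModuleCat.{u} R where
  obj i := ModuleCat.of R (M ⧸ K i)
  map h := ModuleCat.ofHom (Submodule.factor (hK (leOfHom h)))
  map_id _ := by
    ext
    rfl
  map_comp _ _ := by
    ext
    rfl

lemma quotientDiagram_ι_comp_mkQ {ι : Type u} [Preorder ι] {M : Type u} [AddCommGroup M]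
    [Module R M] {K : ι → Submodule R M} {hK : Monotone K} (c : Cocone (quotientDiagram K hK))
    {i j : ι} (h : i ≤ j) : (c.ι.app j).hom ∘ₗ (K j).mkQ = (c.ι.app i).hom ∘ₗ (K i).mkQ := by
  rw [← c.w (homOfLE h)]
  rfl

def torsionClosure (T : Set (ModuleCat.{u} R)) (J : Ideal R) : Ideal R :=
  (torsionSubmodule T (ModuleCat.of R (R ⧸ J))).comap J.mkQ

lemma le_torsionClosure (T : Set (ModuleCat.{u} R)) (J : Ideal R) : J ≤ torsionClosure T J :=
  fun x hx => by
    rw [torsionClosure, Submodule.mem_comap, Submodule.mkQ_apply,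
      (Submodule.Quotient.mk_eq_zero J).2 hx]
    exact zero_mem _

namespace IsTorsionClass

variable {T : Set (ModuleCat.{u} R)} (hT : IsTorsionClass T)
include hT

lemma torsionClosure_mono : Monotone (torsionClosure T) := fun J J' h x hx => by
  have := hT.map_torsionSubmodule_le (M := ModuleCat.of R (R ⧸ J))
    (N := ModuleCat.of R (R ⧸ J')) (Submodule.factor h) (Submodule.mem_map_of_mem hx)
  simpa [torsionClosure] using this

lemma quotient_torsionClosure_mem_freeOf (J : Ideal R) :
    ModuleCat.of R (R ⧸ torsionClosure T J) ∈ freeOf T := by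
  set t := torsionSubmodule T (ModuleCat.of R (R ⧸ J))
  have hker : torsionClosure T J = LinearMap.ker (t.mkQ ∘ₗ J.mkQ) := by
    rw [LinearMap.ker_comp, Submodule.ker_mkQ]
    rfl
  refine mem_freeOf_of_injective (N' := ModuleCat.of R (_ ⧸ t)) ((torsionClosure T J).liftQ _
    hker.le) ?_ (hT.quotient_torsionSubmodule_mem_freeOf _)
  rw [← LinearMap.ker_eq_bot]
  exact Submodule.ker_liftQ_eq_bot' _ _ hker

lemma quotient_mem_of_torsionClosure_eq_top {J : Ideal R} (h : torsionClosure T J = ⊤) :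
    ModuleCat.of R (R ⧸ J) ∈ T := by
  refine hT.mem_of_torsionSubmodule_eq_top (top_unique fun x _ => ?_)
  obtain ⟨r, rfl⟩ := Submodule.mkQ_surjective J x
  exact h.ge Submodule.mem_top

end IsTorsionClass

namespace IsTorsionPair

variable {T F : Set (ModuleCat.{u} R)} (htp : IsTorsionPair T F)
include htp

/-- `R ⧸ J` is the directed colimit of the `R ⧸ J₀` over finitely generated `J₀ ≤ J`; passing to
torsion-free quotients `R ⧸ torsionClosure T J₀`, the colimit lies in `F` and receives a map from
`R ⧸ J ∈ T`, which must vanish, so `1` dies at some finite stage. -/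
theorem exists_fg_le_quotient_mem (hdc : ClosedUnderDirectedColimits F) {J : Ideal R}
    (hJ : ModuleCat.of R (R ⧸ J) ∈ T) :
    ∃ J₀ ≤ J, J₀.FG ∧ ModuleCat.of R (R ⧸ J₀) ∈ T := by
  have hT := htp.isTorsionClass
  let K : Finset J → Ideal R := fun s => torsionClosure T (Ideal.span (Subtype.val '' (s : Set J)))
  have hK : Monotone K := fun s s' h =>
    hT.torsionClosure_mono (Ideal.span_mono (Set.image_mono (Finset.coe_subset.2 h)))
  let c := colimit.cocone (quotientDiagram K hK)
  have hc : IsColimit c := colimit.isColimit _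
  have hcF : c.pt ∈ F := hdc _ _ c hc fun s =>
    htp.torsionFree_eq ▸ hT.quotient_torsionClosure_mem_freeOf _
  have hψ : J ≤ LinearMap.ker ((c.ι.app ∅).hom ∘ₗ (K ∅).mkQ) := fun r hr => by
    have hr' : r ∈ K {⟨r, hr⟩} :=
      le_torsionClosure T _ (Ideal.subset_span ⟨⟨r, hr⟩, Finset.mem_singleton_self _, rfl⟩)
    rw [LinearMap.mem_ker, ← quotientDiagram_ι_comp_mkQ c (Finset.empty_subset {⟨r, hr⟩}),
      LinearMap.comp_apply, Submodule.mkQ_apply, (Submodule.Quotient.mk_eq_zero _).2 hr', map_zero]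
  have h0 := htp.linearMap_eq_zero hJ hcF (J.liftQ _ hψ)
  have h1 : ((c.ι.app ∅).hom ∘ₗ (K ∅).mkQ) 1 = 0 := by
    have := LinearMap.congr_fun h0 (Submodule.Quotient.mk 1)
    rwa [Submodule.liftQ_apply] at this
  obtain ⟨s, _, hs⟩ := exists_map_eq_zero_of_isColimit (y := (K ∅).mkQ 1) hc h1
  change (K s).mkQ 1 = 0 at hs
  rw [Submodule.mkQ_apply, Submodule.Quotient.mk_eq_zero] at hs
  exact ⟨Ideal.span (Subtype.val '' (s : Set J)),
    Ideal.span_le.2 (by rintro _ ⟨r, -, rfl⟩; exact r.2), ⟨s.map (.subtype _), by simp⟩,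
    hT.quotient_mem_of_torsionClosure_eq_top ((Ideal.eq_top_iff_one _).2 hs)⟩

lemma quotient_one_mem : ModuleCat.of R (R ⧸ (1 : Ideal R)) ∈ T :=
  have : Subsingleton (R ⧸ (1 : Ideal R)) := Ideal.Quotient.subsingleton_iff.2 Ideal.one_eq_top
  htp.mem_torsion_of_forall fun _ _ g => LinearMap.ext fun x => by
    rw [Subsingleton.elim x 0, map_zero, LinearMap.zero_apply]

lemma quotient_mul_mem {I J : Ideal R} (hI : ModuleCat.of R (R ⧸ I) ∈ T)
    (hJ : ModuleCat.of R (R ⧸ J) ∈ T) : ModuleCat.of R (R ⧸ I * J) ∈ T := by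
  refine htp.mem_torsion_of_forall fun N hN g => ?_
  -- for `a ∈ I`, the map `b ↦ g (a * b)` kills `J`, so it factors through `R ⧸ J ∈ T`
  have hIg : I ≤ LinearMap.ker (g ∘ₗ (I * J).mkQ) := fun a ha => by
    have hJa : J ≤ LinearMap.ker (g ∘ₗ (I * J).mkQ ∘ₗ LinearMap.toSpanSingleton R R a) :=
      fun b hb => by
        have hba : b • a ∈ I * J := by
          rw [smul_eq_mul, mul_comm b a]
          exact Ideal.mul_mem_mul ha hb
        rw [LinearMap.mem_ker, LinearMap.comp_apply, LinearMap.comp_apply,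
          LinearMap.toSpanSingleton_apply, Submodule.mkQ_apply,
          (Submodule.Quotient.mk_eq_zero _).2 hba, map_zero]
    have := LinearMap.congr_fun (htp.linearMap_eq_zero hJ hN (J.liftQ _ hJa))
      (Submodule.Quotient.mk 1)
    rwa [Submodule.liftQ_apply, LinearMap.comp_apply, LinearMap.comp_apply,
      LinearMap.toSpanSingleton_apply, one_smul,
      LinearMap.zero_apply, ← LinearMap.mem_ker] at this
  refine LinearMap.ext fun x => ?_
  obtain ⟨r, rfl⟩ := Submodule.mkQ_surjective _ x
  have := LinearMap.congr_fun (htp.linearMap_eq_zero hI hN (I.liftQ _ hIg))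
    (Submodule.Quotient.mk r)
  rwa [Submodule.liftQ_apply] at this

lemma quotient_multiset_prod_mem {L : Multiset (Ideal R)}
    (hL : ∀ I ∈ L, ModuleCat.of R (R ⧸ I) ∈ T) : ModuleCat.of R (R ⧸ L.prod) ∈ T :=
  Multiset.prod_induction (fun I => ModuleCat.of R (R ⧸ I) ∈ T) L
    (fun _ _ => htp.quotient_mul_mem) htp.quotient_one_mem hL

theorem thomasonOf_eq (hdc : ClosedUnderDirectedColimits F) :
    thomasonOf T = ⋃ I ∈ {I : Ideal R | I.FG ∧ ModuleCat.of R (R ⧸ I) ∈ T},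
      zeroLocus (I : Set R) := by
  refine subset_antisymm (Set.iUnion₂_subset fun I hI p hp => ?_)
    (Set.biUnion_subset_biUnion_left fun I hI => hI.2)
  obtain ⟨I₀, hI₀I, hI₀, hI₀T⟩ := htp.exists_fg_le_quotient_mem hdc hI
  exact Set.mem_iUnion₂.2 ⟨I₀, ⟨hI₀, hI₀T⟩, fun x hx => hp (hI₀I hx)⟩

lemma quotient_mem_of_zeroLocus_subset (hdc : ClosedUnderDirectedColimits F) {J : Ideal R}
    (hJ : zeroLocus (J : Set R) ⊆ thomasonOf T) : ModuleCat.of R (R ⧸ J) ∈ T := by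
  rw [htp.thomasonOf_eq hdc] at hJ
  obtain ⟨L, hL, hLJ⟩ := exists_multiset_prod_le_of_zeroLocus_subset (fun I hI => hI.1) hJ
  exact htp.isTorsionClass.mem_of_surjective (Submodule.factor hLJ) (Submodule.factor_surjective _)
    (htp.quotient_multiset_prod_mem fun I hI => (hL I hI).2)

theorem eq_torsionOfSet_thomasonOf (hher : HereditaryClass T)
    (hdc : ClosedUnderDirectedColimits F) : T = torsionOfSet.{u} (thomasonOf T) := by
  have hT := htp.isTorsionClass
  have hcyclic : ∀ (M : ModuleCat.{u} R) (m : M), ModuleCat.of R (R ∙ m) ∈ T ↔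
      zeroLocus (Ideal.torsionOf R M m : Set R) ⊆ thomasonOf T := fun M m => by
    refine ⟨fun hm => ?_, fun hm => ?_⟩
    · have := hT.mem_of_linearEquiv (N := ModuleCat.of R (R ⧸ Ideal.torsionOf R M m))
        (Ideal.quotTorsionOfEquivSpanSingleton R M m).symm hm
      exact Set.subset_iUnion₂ (s := fun (I : Ideal R) (_ : ModuleCat.of R (R ⧸ I) ∈ T) =>
        zeroLocus (I : Set R)) _ this
    · exact hT.mem_of_linearEquiv (M := ModuleCat.of R (R ⧸ Ideal.torsionOf R M m))
        (Ideal.quotTorsionOfEquivSpanSingleton R M m)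
        (htp.quotient_mem_of_zeroLocus_subset hdc hm)
  refine Set.ext fun M => ⟨fun hM p hp => ?_, fun hM => ?_⟩
  · obtain ⟨m, hm⟩ := Module.mem_support_iff_exists_annihilator.1 hp
    rw [Ideal.annihilator_span_singleton_eq_torsionOf] at hm
    exact (hcyclic M m).1 (hher M hM _) hm
  · refine hT.mem_of_iSup_range_eq_top (fun m : M => (R ∙ m).subtype) (fun m => (hcyclic M m).2 ?_)
      (eq_top_iff.2 fun m _ => Submodule.mem_iSup_of_mem m (by
        rw [Submodule.range_subtype]
        exact Submodule.mem_span_singleton_self m))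
    rw [← Module.support_span_singleton]
    exact (Module.support_subset_of_injective _ (Submodule.injective_subtype _)).trans hM

end IsTorsionPair

/-- Garkusha–Prest: `T ↦ ⋃{V(I) : R/I ∈ T}` and `X ↦ {M : Supp M ⊆ X}` are mutually
inverse bijections between hereditary torsion pairs of finite type in `Mod-R` and
Thomason subsets of `Spec R`. -/
theorem stmt7 :
    (∀ X : Set (PrimeSpectrum R), IsThomason X →
      IsTorsionPair (torsionOfSet.{u} X) (freeOf (torsionOfSet.{u} X)) ∧
      HereditaryClass (torsionOfSet.{u} X) ∧
      ClosedUnderDirectedColimits (freeOf (torsionOfSet.{u} X)) ∧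
      thomasonOf (torsionOfSet.{u} X) = X) ∧
    (∀ T F : Set (ModuleCat.{u} R), IsTorsionPair T F → HereditaryClass T →
      ClosedUnderDirectedColimits F →
      IsThomason (thomasonOf T) ∧ T = torsionOfSet.{u} (thomasonOf T)) :=
  ⟨fun X hX => ⟨(isTorsionClass_torsionOfSet X).isTorsionPair, hereditaryClass_torsionOfSet X,
      hX.closedUnderDirectedColimits_freeOf, thomasonOf_torsionOfSet hX.stableUnderSpecialization_s7⟩,
    fun _ _ htp hher hdc => ⟨⟨_, fun _ hI => hI.1, htp.thomasonOf_eq hdc⟩,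
      htp.eq_torsionOfSet_thomasonOf hher hdc⟩⟩
end

section
/- Let R be a commutative ring, let (T,F) be a hereditary torsion pair in Mod-R, and let 𝓔 = {E : E an injective R-module with E ∈ F} be the corresponding class of injective modules. Then F is closed under direct limits (directed colimits) if and only if 𝓔 satisfies condition (††): for every directed system (E_i : i ∈ I) of modules in 𝓔, every injective R-module G admitting an injective R-linear map j from the direct limit lim_{i∈I} E_i into G whose image is an essential submodule of G (i.e., every nonzero submodule of G has nonzero intersection with the image of j) belongs to 𝓔. -/
open CategoryTheory
universe u

variable {R : Type u} [CommRing R]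

/-- The injective modules lying in a class `F`. -/
def injOf (F : Set (ModuleCat.{u} R)) : Set (ModuleCat.{u} R) :=
  {E | Injective E ∧ E ∈ F}

/-- Condition (††): for every directed system in `𝓔`, every injective module `G`
receiving an injective map from the direct limit with essential image belongs
to `𝓔`. -/
def DaggerDagger (𝓔 : Set (ModuleCat.{u} R)) : Prop :=
  ∀ (ι : Type u) [Preorder ι] [IsDirected ι (· ≤ ·)] [Nonempty ι]
    (D : ι ⥤ ModuleCat.{u} R), (∀ i, D.obj i ∈ 𝓔) →
    ∀ (c : Limits.Cocone D), Limits.IsColimit c →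
    ∀ G : ModuleCat.{u} R, Injective G →
    ∀ j : c.pt ⟶ G, Function.Injective j →
    (∀ N : Submodule R G, N ≠ ⊥ → N ⊓ LinearMap.range j.hom ≠ ⊥) → G ∈ 𝓔

/-! For a hereditary torsion pair, `F` is closed under essential extensions: if `N ∈ F` is
essential in `G` and `f : M → G` with `M ∈ T`, then `f⁻¹ N ∈ T` maps to zero in `N`, so
`range f` meets `N` trivially and vanishes. This gives (⇒), and also that the injective hull `C`
of `∏ R ⧸ I` (over the ideals with `R ⧸ I ∈ F`) lies in `F`; it cogenerates `F`, since every
cyclic submodule of a module in `F` is such an `R ⧸ I`.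

For (⇐), each `D i` then embeds naturally into the injective module `C ^ Hom(D i, C) ∈ F`.
Filtered colimits of modules are exact, so `lim D` embeds into `lim C ^ Hom(D i, C)`, and by
(††) the injective hull of the latter lies in `F`. -/

universe v

open Limits

theorem exists_maximal_disjoint {α : Type*} [CompleteLattice α] [IsCompactlyGenerated α]
    (a : α) : ∃ b, Maximal (Disjoint · a) b := by
  obtain ⟨b, -, hb⟩ := zorn_le_nonempty₀ {b | Disjoint b a}
    (fun c hc hchain _ _ => ⟨sSup c, hchain.directedOn.disjoint_sSup_left.2 hc,
      fun _ => le_sSup⟩)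
    ⊥ disjoint_bot_left
  exact ⟨b, hb⟩

theorem Module.Injective.of_leftInverse {R : Type*} {Q P : Type v} [Ring R] [AddCommGroup Q]
    [Module R Q] [AddCommGroup P] [Module R P] [Module.Injective R Q] (i : P →ₗ[R] Q)
    (r : Q →ₗ[R] P) (h : Function.LeftInverse r i) : Module.Injective R P where
  out X Y _ _ _ _ f hf g := by
    obtain ⟨g', hg'⟩ := Module.Injective.out f hf (i ∘ₗ g)
    exact ⟨r ∘ₗ g', fun x => by simp [hg', h _]⟩

namespace Submodule

section Essential

variable {R M P : Type*} [Ring R] [AddCommGroup M] [Module R M] [AddCommGroup P] [Module R P]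

def IsEssentialIn (N H : Submodule R M) : Prop :=
  ∀ x ∈ H, x ≠ 0 → ∃ r : R, r • x ≠ 0 ∧ r • x ∈ N

theorem isEssentialIn_top_iff {N : Submodule R M} :
    N.IsEssentialIn ⊤ ↔ ∀ K : Submodule R M, K ≠ ⊥ → K ⊓ N ≠ ⊥ := by
  refine ⟨fun hN K hK => ?_, fun hN x _ hx => ?_⟩
  · obtain ⟨x, hxK, hx⟩ := (Submodule.ne_bot_iff K).mp hK
    obtain ⟨r, hr, hrN⟩ := hN x trivial hx
    exact (Submodule.ne_bot_iff _).mpr ⟨r • x, ⟨K.smul_mem r hxK, hrN⟩, hr⟩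
  · obtain ⟨y, ⟨hyx, hyN⟩, hy⟩ := (Submodule.ne_bot_iff _).mp (hN (span R {x}) (by simpa using hx))
    obtain ⟨r, rfl⟩ := mem_span_singleton.mp hyx
    exact ⟨r, hy, hyN⟩

theorem IsEssentialIn.trans {N H L : Submodule R M} (hN : N.IsEssentialIn H)
    (hH : H.IsEssentialIn L) : N.IsEssentialIn L := by
  intro x hx hx0
  obtain ⟨r, hr, hrH⟩ := hH x hx hx0
  obtain ⟨s, hs, hsN⟩ := hN _ hrH hr
  exact ⟨s * r, by rwa [mul_smul], by rwa [mul_smul]⟩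

theorem IsEssentialIn.map {N H : Submodule R M} (hN : N.IsEssentialIn H) {f : M →ₗ[R] P}
    (hf : Function.Injective f) : (N.map f).IsEssentialIn (H.map f) := by
  rintro _ ⟨y, hy, rfl⟩ hy0
  obtain ⟨r, hr, hrN⟩ := hN y hy fun h => hy0 (by simp [h])
  exact ⟨r, by rwa [← map_smul, ne_eq, map_eq_zero_iff f hf], r • y, hrN, map_smul f r y⟩

theorem IsEssentialIn.injective_of_injective_comp {Q : Type*} [AddCommGroup Q] [Module R Q]
    {φ : P →ₗ[R] M} {σ : M →ₗ[R] Q} (hφ : (LinearMap.range φ).IsEssentialIn ⊤)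
    (h : Function.Injective (σ ∘ₗ φ)) : Function.Injective σ := by
  refine (injective_iff_map_eq_zero σ).mpr fun q hq => by_contra fun hq0 => ?_
  obtain ⟨r, hr, p, hp⟩ := hφ q trivial hq0
  have : p = 0 := h (by simp [hp, hq])
  exact hr (by simp [← hp, this])

theorem isEssentialIn_top_map_mkQ {H K : Submodule R M} (hK : Maximal (Disjoint · H) K) :
    (H.map K.mkQ).IsEssentialIn ⊤ := by
  intro q _ hq
  obtain ⟨z, rfl⟩ := K.mkQ_surjective q
  have hzK : z ∉ K := by simpa [Quotient.mk_eq_zero] using hq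
  have hnd : ¬ Disjoint (K ⊔ span R {z}) H := fun hd =>
    hzK (hK.2 hd le_sup_left (mem_sup_right (mem_span_singleton_self z)))
  obtain ⟨k, hk, _, hy, hH, hh⟩ := by simpa [disjoint_def] using hnd
  obtain ⟨r, rfl⟩ := mem_span_singleton.mp hy
  have hkq : (Quotient.mk k : M ⧸ K) = 0 := (Quotient.mk_eq_zero K).mpr hk
  refine ⟨r, fun h0 => hh ?_, k + r • z, hH, by simp [hkq]⟩
  have : k + r • z ∈ K := by
    rw [← Quotient.mk_eq_zero]
    simpa [hkq] using h0
  exact disjoint_def.mp hK.1 _ this hH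

theorem exists_maximal_isEssentialIn (N : Submodule R M) :
    ∃ H, Maximal (fun H => N ≤ H ∧ N.IsEssentialIn H) H := by
  obtain ⟨H, -, hH⟩ := zorn_le_nonempty₀ {H | N ≤ H ∧ N.IsEssentialIn H}
    (fun c hc hchain y hy => by
      refine ⟨sSup c, ⟨(hc hy).1.trans (le_sSup hy), fun x hx hx0 => ?_⟩, fun _ => le_sSup⟩
      obtain ⟨H, hHc, hxH⟩ := (mem_sSup_of_directed ⟨y, hy⟩ hchain.directedOn).mp hx
      exact (hc hHc).2 x hxH hx0)
    N ⟨le_rfl, fun x hx hx0 => ⟨1, by simpa using hx0, by simpa using hx⟩⟩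
  exact ⟨H, hH⟩

end Essential

/- With `K` a complement of `H`, `H` is essential in `I ⧸ K`; so an extension `σ : I ⧸ K → I` of
`H ↪ I` is injective and its range is an essential extension of `N`, hence is `H`. -/
theorem exists_leftInverse_subtype_of_maximal {R I : Type*} [Ring R] [AddCommGroup I]
    [Module R I] [Module.Injective R I] {N H : Submodule R I}
    (hH : Maximal (fun H => N ≤ H ∧ N.IsEssentialIn H) H) :
    ∃ ρ : I →ₗ[R] H, Function.LeftInverse ρ H.subtype := by
  obtain ⟨K, hK⟩ := exists_maximal_disjoint H
  let φ := K.mkQ ∘ₗ H.subtype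
  have hφ : Function.Injective φ := by
    refine (injective_iff_map_eq_zero φ).mpr fun x hx => Subtype.ext ?_
    exact disjoint_def.mp hK.1 _ ((Quotient.mk_eq_zero K).mp hx) x.2
  obtain ⟨σ, hσ⟩ := Module.Injective.out φ hφ H.subtype
  have hσφ : σ ∘ₗ φ = H.subtype := LinearMap.ext hσ
  have hφess : (LinearMap.range φ).IsEssentialIn ⊤ := by
    rw [LinearMap.range_comp, range_subtype]
    exact isEssentialIn_top_map_mkQ hK
  have hσinj := hφess.injective_of_injective_comp (hσφ ▸ H.injective_subtype)
  have hHσ : H.IsEssentialIn (LinearMap.range σ) := by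
    simpa [map_top, ← LinearMap.range_comp, hσφ] using hφess.map hσinj
  have hσH : H ≤ LinearMap.range σ := fun x hx => ⟨φ ⟨x, hx⟩, hσ ⟨x, hx⟩⟩
  have hσle : LinearMap.range σ ≤ H := hH.2 ⟨hH.1.1.trans hσH, hH.1.2.trans hHσ⟩ hσH
  exact ⟨(σ ∘ₗ K.mkQ).codRestrict H fun x => hσle ⟨_, rfl⟩, fun x => Subtype.ext (hσ x)⟩

end Submodule

theorem Module.Injective.exists_isEssentialIn {R I : Type*} [Ring R] [AddCommGroup I]
    [Module R I] [Module.Injective R I] (N : Submodule R I) :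
    ∃ H : Submodule R I, N ≤ H ∧ N.IsEssentialIn H ∧ Module.Injective R H := by
  obtain ⟨H, hH⟩ := N.exists_maximal_isEssentialIn
  obtain ⟨ρ, hρ⟩ := Submodule.exists_leftInverse_subtype_of_maximal hH
  exact ⟨H, hH.1.1, hH.1.2, .of_leftInverse H.subtype ρ hρ⟩

namespace ModuleCat

variable {R : Type*} [Ring R]

theorem exists_injective_isEssentialIn_range [Small.{v} R] (M : ModuleCat.{v} R) :
    ∃ (G : ModuleCat.{v} R) (j : M ⟶ G), Injective G ∧ Function.Injective j ∧
      (LinearMap.range j.hom).IsEssentialIn ⊤ := by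
  have : Module.Injective R (Injective.under M : ModuleCat.{v} R) :=
    Module.injective_module_of_injective_object R _ (inj := Injective.injective_under M)
  have hι : Function.Injective (Injective.ι M) := (mono_iff_injective _).mp inferInstance
  obtain ⟨H, hle, hess, hH⟩ :=
    Module.Injective.exists_isEssentialIn (LinearMap.range (Injective.ι M).hom)
  refine ⟨of R H, ofHom ((Injective.ι M).hom.codRestrict H fun m => hle ⟨m, rfl⟩),
    Module.injective_object_of_injective_module R H, fun m m' hm => hι congr(($hm).1), ?_⟩
  rintro x - hx
  obtain ⟨r, hr, m, hm⟩ := hess x x.2 (by simpa using hx)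
  exact ⟨r, fun h => hr congr(($h).1), m, Subtype.ext hm⟩

variable (C : ModuleCat.{v} R)

def homPow : ModuleCat.{v} R ⥤ ModuleCat.{v} R where
  obj M := of R ((M ⟶ C) → C)
  map φ := ofHom (LinearMap.pi fun g => LinearMap.proj (φ ≫ g))

def toHomPow : 𝟭 (ModuleCat.{v} R) ⟶ homPow C where
  app M := ofHom (LinearMap.pi fun g => g.hom)

theorem toHomPow_app_injective {M : ModuleCat.{v} R}
    (hC : ∀ x : M, x ≠ 0 → ∃ f : M ⟶ C, f x ≠ 0) :
    Function.Injective ((toHomPow C).app M) := by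
  refine (injective_iff_map_eq_zero _).mpr fun x hx => by_contra fun hx0 => ?_
  obtain ⟨f, hf⟩ := hC x hx0
  exact hf (congr_fun hx f)

instance injective_homPow_obj [Small.{v} R] [Injective C] (M : ModuleCat.{v} R) :
    Injective ((homPow C).obj M) :=
  have := Module.injective_module_of_injective_object R C
  Module.injective_object_of_injective_module R _

end ModuleCat

namespace IsTorsionPair

variable {T F : Set (ModuleCat.{u} R)}

theorem mem_of_injective (h : IsTorsionPair T F) {N P : ModuleCat.{u} R} (f : N ⟶ P)
    (hf : Function.Injective f) (hP : P ∈ F) : N ∈ F := by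
  refine (h.mem_torsionFree_iff N).mpr fun M hM g => ?_
  have : g ≫ f = 0 := (h.mem_torsionFree_iff P).mp hP M hM (g ≫ f)
  ext x
  exact hf (by simpa using congr($this x))

theorem pi_mem (h : IsTorsionPair T F) {X : Type u} (A : X → Type u)
    [∀ x, AddCommGroup (A x)] [∀ x, Module R (A x)]
    (hA : ∀ x, ModuleCat.of R (A x) ∈ F) : ModuleCat.of R (∀ x, A x) ∈ F := by
  refine (h.mem_torsionFree_iff _).mpr fun M hM g => ?_
  ext m x
  show g m x = 0
  have := (h.mem_torsionFree_iff _).mp (hA x) M hM (ModuleCat.ofHom (LinearMap.proj x ∘ₗ g.hom))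
  simpa using congr($this m)

theorem mem_of_isEssentialIn_range (h : IsTorsionPair T F) (hher : HereditaryClass T)
    {N G : ModuleCat.{u} R} (hN : N ∈ F) (j : N ⟶ G) (hj : Function.Injective j)
    (hess : (LinearMap.range j.hom).IsEssentialIn ⊤) : G ∈ F := by
  refine (h.mem_torsionFree_iff G).mpr fun M hM f => ?_
  let S := (LinearMap.range j.hom).comap f.hom
  let g : ModuleCat.of R S ⟶ N := ModuleCat.ofHom
    ((LinearEquiv.ofInjective j.hom hj).symm.toLinearMap ∘ₗ f.hom.restrict fun _ => id)
  have hg : g = 0 := (h.mem_torsionFree_iff N).mp hN _ (hher M hM S) g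
  have hfS : ∀ m ∈ S, f m = 0 := fun m hm => by
    simpa [g, LinearMap.restrict_apply] using congr($hg ⟨m, hm⟩)
  ext m
  by_contra hm
  obtain ⟨r, hr, hrS⟩ := hess (f m) trivial hm
  exact hr (by rw [← map_smul]; exact hfS (r • m) (by simpa [S] using hrS))

theorem exists_injective_cogenerator (h : IsTorsionPair T F) (hher : HereditaryClass T) :
    ∃ C : ModuleCat.{u} R, Injective C ∧ C ∈ F ∧
      ∀ M ∈ F, ∀ x : M, x ≠ 0 → ∃ f : M ⟶ C, f x ≠ 0 := by
  let ι := {I : Ideal R // ModuleCat.of R (R ⧸ I) ∈ F}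
  obtain ⟨C, j, hC, hj, hess⟩ :=
    ModuleCat.exists_injective_isEssentialIn_range (.of R (∀ I : ι, R ⧸ I.1))
  have := Module.injective_module_of_injective_object R C
  refine ⟨C, hC, h.mem_of_isEssentialIn_range hher (h.pi_mem _ fun I => I.2) j hj hess,
    fun M hM x hx => ?_⟩
  let ℓ := LinearMap.toSpanSingleton R M x
  let u := (LinearMap.ker ℓ).liftQ ℓ le_rfl
  have hu : Function.Injective u :=
    LinearMap.ker_eq_bot.mp (Submodule.ker_liftQ_eq_bot _ _ _ le_rfl)
  let I : ι := ⟨LinearMap.ker ℓ, h.mem_of_injective (ModuleCat.ofHom u) hu hM⟩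
  obtain ⟨f, hf⟩ :=
    Module.Injective.out u hu (j.hom ∘ₗ LinearMap.single R (fun I : ι => R ⧸ I.1) I)
  refine ⟨ModuleCat.ofHom f, fun h0 => hx ?_⟩
  have hx1 : u (Submodule.Quotient.mk 1) = x := LinearMap.toSpanSingleton_apply_one R M x
  have h1 : (Submodule.Quotient.mk 1 : R ⧸ LinearMap.ker ℓ) = 0 := by
    have : Pi.single I (Submodule.Quotient.mk 1 : R ⧸ LinearMap.ker ℓ) = 0 :=
      (injective_iff_map_eq_zero _).mp hj _ ((hf _).symm.trans (hx1 ▸ h0))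
    simpa using congr_fun this I
  rw [← hx1, h1, map_zero]

end IsTorsionPair

/-- For a hereditary torsion pair `(T,F)` with associated class `𝓔` of injective
torsion-free modules: `F` is closed under direct limits iff `𝓔` satisfies (††). -/
theorem stmt9 (T F : Set (ModuleCat.{u} R)) (h : IsTorsionPair T F)
    (hher : HereditaryClass T) :
    ClosedUnderDirectedColimits F ↔ DaggerDagger (injOf F) := by
  constructor
  · intro hcl ι _ _ _ D hD c hc G hG j hj hess
    exact ⟨hG, h.mem_of_isEssentialIn_range hher (hcl ι D c hc fun i => (hD i).2) j hj
      (Submodule.isEssentialIn_top_iff.mpr hess)⟩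
  · intro hdd ι _ _ _ D c hc hDF
    obtain ⟨C, hC, hCF, hcogen⟩ := h.exists_injective_cogenerator hher
    let η := Functor.whiskerLeft D (ModuleCat.toHomPow C)
    have : ∀ i, Mono (η.app i) := fun i => (ModuleCat.mono_iff_injective _).mpr
      (ModuleCat.toHomPow_app_injective C (hcogen _ (hDF i)))
    have := NatTrans.mono_of_mono_app η
    have hE : ∀ i, (D ⋙ ModuleCat.homPow C).obj i ∈ injOf F := fun i =>
      ⟨ModuleCat.injective_homPow_obj C (D.obj i), h.pi_mem _ fun _ => hCF⟩
    let c' := colimit.cocone (D ⋙ ModuleCat.homPow C)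
    let f := hc.desc ((Cocone.precompose η).obj c')
    have hf : Mono f := colim.map_mono' η hc (colimit.isColimit _) f (hc.fac _)
    obtain ⟨G, j, hG, hj, hess⟩ := ModuleCat.exists_injective_isEssentialIn_range c'.pt
    have hGF : G ∈ F := (hdd ι _ hE c' (colimit.isColimit _) G hG j hj
      (Submodule.isEssentialIn_top_iff.mp hess)).2
    exact h.mem_of_injective (f ≫ j) (hj.comp ((ModuleCat.mono_iff_injective f).mp hf)) hGF
end
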